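/- arXiv:2107.07232 — 2 statements merged into one kernel-verified Lean document; each statement's English description precedes it below -/
import Mathlib

section
/- Among all centers c ∈ ℝ^d, the standard Gaussian measure of the ball B_{r,c} of radius r centered at c is maximized at c = 0: Q(B_{r,c}) ≤ Q(B_{r,0}) for all c. -/
open MeasureTheory Metric Real

noncomputable section

abbrev E (d : ℕ) := EuclideanSpace ℝ (Fin d)

def stdGaussian (d : ℕ) : Measure (E d) :=
  volume.withDensity (fun z => ENNReal.ofReal ((2 * π) ^ (-(d : ℝ) / 2) * Real.exp (-‖z‖ ^ 2 / 2)))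

def tvDist {Ω : Type*} [MeasurableSpace Ω] (P Q : Measure Ω) : ℝ :=
  ⨆ A : {s : Set Ω // MeasurableSet s}, |(P A.1).toReal - (Q A.1).toReal|

/-
The point reflection `x ↦ c - x` preserves Lebesgue measure and swaps `B_{r,c}` with `B_{r,0}`,
hence swaps `B_{r,c} \ B_{r,0}` with `B_{r,0} \ B_{r,c}`. On the first of these, `‖c - x‖ ≤ r < ‖x‖`,
so a density that decreases with the norm is larger at the reflected point; thus the part of
`B_{r,c}` outside `B_{r,0}` carries less mass than the part of `B_{r,0}` outside `B_{r,c}`.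
-/

theorem withDensity_closedBall_le_closedBall_zero {F : Type*} [NormedAddCommGroup F]
    [MeasurableSpace F] [BorelSpace F] (μ : Measure F) [μ.IsAddLeftInvariant] [μ.IsNegInvariant]
    {g : F → ENNReal} (hg : ∀ x y, ‖x‖ ≤ ‖y‖ → g y ≤ g x) (c : F) (r : ℝ) :
    μ.withDensity g (closedBall c r) ≤ μ.withDensity g (closedBall 0 r) := by
  set A := closedBall c r
  set B := closedBall (0 : F) r
  have hA : MeasurableSet A := measurableSet_closedBall
  have hB : MeasurableSet B := measurableSet_closedBall
  have reflect : (fun x => c - x) ⁻¹' (B \ A) = A \ B := by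
    ext x
    simp [A, B, dist_eq_norm, norm_sub_rev]
  have outside_le : μ.withDensity g (A \ B) ≤ μ.withDensity g (B \ A) := by
    rw [withDensity_apply _ (hA.diff hB), withDensity_apply _ (hB.diff hA)]
    calc ∫⁻ x in A \ B, g x ∂μ ≤ ∫⁻ x in A \ B, g (c - x) ∂μ := by
          refine setLIntegral_mono' (hA.diff hB) fun x ⟨hxA, hxB⟩ => hg _ _ ?_
          rw [mem_closedBall, dist_eq_norm, ← norm_sub_rev] at hxA
          rw [mem_closedBall, dist_zero_right, not_le] at hxB
          exact hxA.trans hxB.le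
      _ = ∫⁻ x in B \ A, g x ∂μ := by
          rw [← reflect, (μ.measurePreserving_sub_left c).setLIntegral_comp_preimage_emb
            (MeasurableEquiv.subLeft c).measurableEmbedding]
  calc μ.withDensity g A = μ.withDensity g (A ∩ B) + μ.withDensity g (A \ B) :=
        (measure_inter_add_sdiff A hB).symm
    _ ≤ μ.withDensity g (B ∩ A) + μ.withDensity g (B \ A) := by
        rw [Set.inter_comm]
        gcongr
    _ = μ.withDensity g B := measure_inter_add_sdiff B hA

theorem stmt6 (d : ℕ) (r : ℝ) (c : E d) :
    stdGaussian d (closedBall c r) ≤ stdGaussian d (closedBall 0 r) := by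
  refine withDensity_closedBall_le_closedBall_zero _ (fun x y hxy => ?_) c r
  gcongr
end
end

section
/- Let F : ℝ^d → ℝ^d be a bijection with F⁻¹ L₂-Lipschitz, Q the standard Gaussian measure, P̂(A) = Q(F(A)), and P* any probability measure. Then for every R > 0, D_TV(P*, P̂) ≥ γ(d/2, R²/(2L₂²))/Γ(d/2) − P*(B_{R, F⁻¹(0)}). In particular, if P*(B_{R,F⁻¹(0)}) < γ(d/2, R²/(2L₂²))/Γ(d/2), then D_TV(P*, P̂) > 0. -/
open MeasureTheory Metric Real

noncomputable section

def lowerIncGamma (s x : ℝ) : ℝ := ∫ t in (0 : ℝ)..x, t ^ (s - 1) * Real.exp (-t)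

/-!
Since `F⁻¹` is `L₂`-Lipschitz, `F` maps the ball `B = B_{R, F⁻¹ 0}` onto a superset of the
centred ball of radius `R / L₂`, so `P̂(B) ≥ Q(B_{R / L₂, 0})`. In polar coordinates, followed by
the substitution `t = y² / 2`, the Gaussian mass of that ball is `γ(d/2, R²/(2L₂²)) / Γ(d/2)`,
and `D_TV(P*, P̂) ≥ P̂(B) - P*(B)`.
-/

open Set

lemma abs_sub_le_tvDist {Ω : Type*} [MeasurableSpace Ω] (P Q : Measure Ω) [IsFiniteMeasure P]
    [IsFiniteMeasure Q] {A : Set Ω} (hA : MeasurableSet A) :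
    |(P A).toReal - (Q A).toReal| ≤ tvDist P Q := by
  refine le_ciSup (f := fun B : {s : Set Ω // MeasurableSet s} => |(P B.1).toReal - (Q B.1).toReal|)
    ⟨(P univ).toReal + (Q univ).toReal, ?_⟩ ⟨A, hA⟩
  rintro _ ⟨B, rfl⟩
  refine (abs_sub _ _).trans ?_
  rw [abs_of_nonneg ENNReal.toReal_nonneg, abs_of_nonneg ENNReal.toReal_nonneg]
  exact add_le_add (measureReal_mono (subset_univ _)) (measureReal_mono (subset_univ _))

lemma closedBall_subset_image_closedBall {X Y : Type*} [PseudoMetricSpace X] [PseudoMetricSpace Y]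
    {F : X → Y} {G : Y → X} (hFG : ∀ y, F (G y) = y) {L : ℝ} (hL : 0 < L)
    (hG : ∀ y₁ y₂, dist (G y₁) (G y₂) ≤ L * dist y₁ y₂) (c : Y) (R : ℝ) :
    closedBall c (R / L) ⊆ F '' closedBall (G c) R := by
  intro y hy
  refine ⟨G y, ?_, hFG y⟩
  calc dist (G y) (G c) ≤ L * dist y c := hG y c
    _ ≤ L * (R / L) := by gcongr; exact hy
    _ = R := by field_simp

lemma setIntegral_closedBall_fun_norm_addHaar {F : Type*} [NormedAddCommGroup F] [NormedSpace ℝ F]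
    {V : Type*} [NormedAddCommGroup V] [NormedSpace ℝ V] [FiniteDimensional ℝ V] [Nontrivial V]
    [MeasurableSpace V] [BorelSpace V] (μ : Measure V) [μ.IsAddHaarMeasure] (f : ℝ → F) (r : ℝ) :
    ∫ x in closedBall 0 r, f ‖x‖ ∂μ =
      Module.finrank ℝ V • μ.real (ball 0 1) •
        ∫ y in Ioc 0 r, y ^ (Module.finrank ℝ V - 1) • f y := by
  have hball : (closedBall (0 : V) r).indicator (fun x => f ‖x‖) =
      fun x => (Iic r).indicator f ‖x‖ := by
    ext x
    simp only [indicator, mem_closedBall_zero_iff, mem_Iic]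
  rw [← integral_indicator measurableSet_closedBall, hball, integral_fun_norm_addHaar,
    ← Ioi_inter_Iic, ← setIntegral_indicator measurableSet_Iic]
  simp_rw [indicator_smul_apply]

lemma image_sq_div_two_Ioc {r : ℝ} (hr : 0 ≤ r) :
    (fun y : ℝ => y ^ 2 / 2) '' Ioc 0 r = Ioc 0 (r ^ 2 / 2) := by
  ext t
  simp only [mem_image, mem_Ioc]
  constructor
  · rintro ⟨y, ⟨hy0, hyr⟩, rfl⟩
    exact ⟨by positivity, by gcongr⟩
  · rintro ⟨ht0, htr⟩
    refine ⟨√(2 * t), ⟨by positivity, ?_⟩, ?_⟩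
    · rw [sqrt_le_left hr]
      linarith
    · rw [sq_sqrt (by positivity)]
      ring

lemma injOn_sq_div_two_Ioi : InjOn (fun y : ℝ => y ^ 2 / 2) (Ioi 0) := by
  intro a (ha : 0 < a) b (hb : 0 < b) hab
  simpa [ha.le, hb.le, sq_eq_sq₀] using hab

lemma rpow_two_mul_sub_one_mul_exp {s y : ℝ} (hy : 0 < y) :
    y ^ (2 * s - 1) * exp (-y ^ 2 / 2) =
      2 ^ (s - 1) * (y * ((y ^ 2 / 2) ^ (s - 1) * exp (-(y ^ 2 / 2)))) := by
  rw [div_rpow (by positivity) zero_le_two, ← rpow_natCast, ← rpow_mul hy.le, neg_div]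
  have : (0 : ℝ) < 2 ^ (s - 1) := by positivity
  field_simp
  rw [mul_comm y, ← rpow_add_one hy.ne']
  push_cast
  ring_nf

lemma setIntegral_Ioc_rpow_mul_exp_neg_sq_div_two (s : ℝ) {r : ℝ} (hr : 0 ≤ r) :
    ∫ y in Ioc 0 r, y ^ (2 * s - 1) * exp (-y ^ 2 / 2) =
      2 ^ (s - 1) * lowerIncGamma s (r ^ 2 / 2) := by
  have hderiv : ∀ y ∈ Ioc (0 : ℝ) r, HasDerivWithinAt (fun y : ℝ => y ^ 2 / 2) y (Ioc 0 r) y :=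
    fun y _ => by simpa using ((hasDerivAt_pow 2 y).div_const 2).hasDerivWithinAt
  rw [lowerIncGamma, intervalIntegral.integral_of_le (by positivity), ← image_sq_div_two_Ioc hr,
    integral_image_eq_integral_abs_deriv_smul measurableSet_Ioc hderiv
      (injOn_sq_div_two_Ioi.mono Ioc_subset_Ioi_self), ← integral_const_mul]
  refine setIntegral_congr_fun measurableSet_Ioc fun y hy => ?_
  rw [abs_of_pos hy.1, smul_eq_mul, rpow_two_mul_sub_one_mul_exp hy.1]

lemma EuclideanSpace.measureReal_ball_zero_one (ι : Type*) [Fintype ι] [Nonempty ι] :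
    (volume : Measure (EuclideanSpace ℝ ι)).real (ball 0 1) =
      √π ^ Fintype.card ι / Gamma (Fintype.card ι / 2 + 1) := by
  rw [measureReal_def, EuclideanSpace.volume_ball]
  simp [ENNReal.toReal_ofReal (by positivity : (0 : ℝ) ≤ √π ^ Fintype.card ι /
    Gamma (Fintype.card ι / 2 + 1))]

lemma stdGaussian_closedBall_zero {d : ℕ} (hd : 1 ≤ d) {r : ℝ} (hr : 0 ≤ r) :
    (stdGaussian d (closedBall 0 r)).toReal =
      lowerIncGamma (d / 2) (r ^ 2 / 2) / Gamma (d / 2) := by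
  have : Nonempty (Fin d) := ⟨⟨0, hd⟩⟩
  have hcont : Continuous fun z : E d => (2 * π) ^ (-(d : ℝ) / 2) * exp (-‖z‖ ^ 2 / 2) := by
    fun_prop
  rw [stdGaussian, withDensity_apply _ measurableSet_closedBall,
    ← ofReal_integral_eq_lintegral_ofReal
      (hcont.continuousOn.integrableOn_compact (isCompact_closedBall _ _))
      (ae_of_all _ fun z => by positivity), ENNReal.toReal_ofReal (by positivity),
    integral_const_mul, setIntegral_closedBall_fun_norm_addHaar volume (fun y => exp (-y ^ 2 / 2)),
    finrank_euclideanSpace_fin, EuclideanSpace.measureReal_ball_zero_one, Fintype.card_fin]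
  have hs : (0 : ℝ) < d / 2 := by positivity
  have hradial : ∫ y in Ioc 0 r, y ^ (d - 1) • exp (-y ^ 2 / 2) =
      2 ^ ((d : ℝ) / 2 - 1) * lowerIncGamma (d / 2) (r ^ 2 / 2) := by
    rw [← setIntegral_Ioc_rpow_mul_exp_neg_sq_div_two _ hr]
    refine setIntegral_congr_fun measurableSet_Ioc fun y _ => ?_
    rw [smul_eq_mul, ← rpow_natCast, Nat.cast_sub hd]
    ring_nf
  have hsqrt : √π ^ d = π ^ ((d : ℝ) / 2) := by
    rw [sqrt_eq_rpow, ← rpow_natCast, ← rpow_mul pi_pos.le]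
    ring_nf
  rw [hradial, hsqrt, Gamma_add_one hs.ne', neg_div, rpow_neg (by positivity),
    mul_rpow zero_le_two pi_pos.le, rpow_sub_one two_ne_zero, nsmul_eq_mul, smul_eq_mul]
  have := Gamma_pos_of_pos hs
  field_simp

lemma integrable_exp_neg_sq_norm_div_two (d : ℕ) :
    Integrable fun z : E d => exp (-‖z‖ ^ 2 / 2) := by
  refine (GaussianFourier.integrable_cexp_neg_mul_sq_norm_add (V := E d) (b := 1 / 2)
    (by norm_num) 0 0).norm.congr (ae_of_all _ fun z => ?_)
  simp [Complex.norm_exp, ← Complex.ofReal_pow, div_eq_inv_mul]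

instance (d : ℕ) : IsFiniteMeasure (stdGaussian d) :=
  isFiniteMeasure_withDensity_ofReal ((integrable_exp_neg_sq_norm_div_two d).const_mul _).2

theorem stmt14_general (d : ℕ) (hd : 1 ≤ d) (F Finv : E d → E d) (L₂ : ℝ) (hL₂ : 0 < L₂)
    (hinv₂ : ∀ z, F (Finv z) = z)
    (hFinv : ∀ z₁ z₂, ‖Finv z₁ - Finv z₂‖ ≤ L₂ * ‖z₁ - z₂‖)
    (Pstar : Measure (E d)) [IsProbabilityMeasure Pstar]
    (Phat : Measure (E d)) (hPhat : ∀ A : Set (E d), MeasurableSet A → Phat A = stdGaussian d (F '' A)) :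
    (∀ (R : ℝ), 0 < R →
      tvDist Pstar Phat ≥
        lowerIncGamma ((d : ℝ) / 2) (R ^ 2 / (2 * L₂ ^ 2)) / Real.Gamma ((d : ℝ) / 2) -
          (Pstar (closedBall (Finv 0) R)).toReal) ∧
    ((∃ R : ℝ, 0 < R ∧
        (Pstar (closedBall (Finv 0) R)).toReal <
          lowerIncGamma ((d : ℝ) / 2) (R ^ 2 / (2 * L₂ ^ 2)) / Real.Gamma ((d : ℝ) / 2)) →
      0 < tvDist Pstar Phat) := by
  have : IsFiniteMeasure Phat := ⟨by rw [hPhat _ .univ]; exact measure_lt_top _ _⟩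
  have hlower (R : ℝ) (hR : 0 < R) :
      lowerIncGamma ((d : ℝ) / 2) (R ^ 2 / (2 * L₂ ^ 2)) / Real.Gamma ((d : ℝ) / 2) -
        (Pstar (closedBall (Finv 0) R)).toReal ≤ tvDist Pstar Phat := by
    set B := closedBall (Finv 0) R
    have hball : lowerIncGamma ((d : ℝ) / 2) (R ^ 2 / (2 * L₂ ^ 2)) / Real.Gamma ((d : ℝ) / 2) ≤
        (Phat B).toReal := by
      have hsub := closedBall_subset_image_closedBall hinv₂ hL₂
        (by simpa only [dist_eq_norm] using hFinv) 0 R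
      rw [hPhat _ measurableSet_closedBall, show R ^ 2 / (2 * L₂ ^ 2) = (R / L₂) ^ 2 / 2 by ring,
        ← stdGaussian_closedBall_zero hd (by positivity)]
      exact measureReal_mono hsub
    have hTV := abs_sub_le_tvDist Pstar Phat (measurableSet_closedBall : MeasurableSet B)
    linarith [neg_le_abs ((Pstar B).toReal - (Phat B).toReal)]
  exact ⟨hlower, fun ⟨R, hR, hlt⟩ => by linarith [hlower R hR]⟩

theorem stmt14 (d : ℕ) (hd : 1 ≤ d) (F Finv : E d → E d) (L₂ : ℝ) (hL₂ : 0 < L₂)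
    (hbij : Function.Bijective F)
    (hinv₁ : ∀ x, Finv (F x) = x) (hinv₂ : ∀ z, F (Finv z) = z)
    (hFinv : ∀ z₁ z₂, ‖Finv z₁ - Finv z₂‖ ≤ L₂ * ‖z₁ - z₂‖)
    (Pstar : Measure (E d)) [IsProbabilityMeasure Pstar]
    (Phat : Measure (E d)) (hPhat : ∀ A : Set (E d), MeasurableSet A → Phat A = stdGaussian d (F '' A)) :
    (∀ (R : ℝ), 0 < R →
      tvDist Pstar Phat ≥
        lowerIncGamma ((d : ℝ) / 2) (R ^ 2 / (2 * L₂ ^ 2)) / Real.Gamma ((d : ℝ) / 2) -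
          (Pstar (closedBall (Finv 0) R)).toReal) ∧
    ((∃ R : ℝ, 0 < R ∧
        (Pstar (closedBall (Finv 0) R)).toReal <
          lowerIncGamma ((d : ℝ) / 2) (R ^ 2 / (2 * L₂ ^ 2)) / Real.Gamma ((d : ℝ) / 2)) →
      0 < tvDist Pstar Phat) :=
  stmt14_general d hd F Finv L₂ hL₂ hinv₂ hFinv Pstar Phat hPhat
end
end
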